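/- arXiv:1807.02899 — 3 statements merged into one kernel-verified Lean document; each statement's English description precedes it below -/
import Mathlib

section
/- Let G be an (n, m) graph. If m = n, then the spread of the line graph of G equals the signless Laplacian spread of G, i.e., S_L(G) = q_1 - q_n = S_Q(G). -/
/-!
Let `R` be the `n × m` vertex-edge incidence matrix of `G`. Then `R Rᵀ = Q(G)` and
`Rᵀ R = A(L(G)) + 2I`. When `m = n` both products are square of the same size, so they share
their characteristic polynomial; hence the spectrum of `Q(G)` is that of `A(L(G))` shifted by `2`,
and a shift does not change the spread.
-/

open Matrix Polynomial BigOperators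

noncomputable section

namespace SpreadPaper

variable {V : Type*}

/-- The adjacency matrix of a simple graph over `ℝ` (classical decidability). -/
noncomputable def adjMat (G : SimpleGraph V) : Matrix V V ℝ :=
  letI := Classical.decRel G.Adj
  G.adjMatrix ℝ

lemma adjMat_isHermitian (G : SimpleGraph V) : (adjMat G).IsHermitian := by
  letI := Classical.decRel G.Adj
  ext i j
  simp [adjMat, Matrix.conjTranspose_apply, SimpleGraph.adjMatrix_apply, G.adj_comm]

/-- The degree of a vertex (classical decidability). -/
noncomputable def deg [Fintype V] (G : SimpleGraph V) (v : V) : ℕ :=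
  letI := Classical.decRel G.Adj
  G.degree v

/-- The signless Laplacian matrix `D + A` of a graph. -/
noncomputable def signQ [Fintype V] [DecidableEq V] (G : SimpleGraph V) : Matrix V V ℝ :=
  Matrix.diagonal (fun v => (deg G v : ℝ)) + adjMat G

lemma signQ_isHermitian [Fintype V] [DecidableEq V] (G : SimpleGraph V) :
    (signQ G).IsHermitian :=
  (Matrix.isHermitian_diagonal _).add (adjMat_isHermitian G)

/-- The Laplacian matrix `D - A` of a graph. -/
noncomputable def lap [Fintype V] [DecidableEq V] (G : SimpleGraph V) : Matrix V V ℝ :=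
  Matrix.diagonal (fun v => (deg G v : ℝ)) - adjMat G

lemma lap_isHermitian [Fintype V] [DecidableEq V] (G : SimpleGraph V) :
    (lap G).IsHermitian :=
  (Matrix.isHermitian_diagonal _).sub (adjMat_isHermitian G)

/-- The largest eigenvalue of a Hermitian real matrix. -/
noncomputable def maxEig {m : Type*} [Fintype m] [DecidableEq m] {A : Matrix m m ℝ}
    (hA : A.IsHermitian) : ℝ :=
  ⨆ i, hA.eigenvalues i

/-- The smallest eigenvalue of a Hermitian real matrix. -/
noncomputable def minEig {m : Type*} [Fintype m] [DecidableEq m] {A : Matrix m m ℝ}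
    (hA : A.IsHermitian) : ℝ :=
  ⨅ i, hA.eigenvalues i

/-- The spread (largest minus smallest eigenvalue) of a Hermitian real matrix. -/
noncomputable def sprd {m : Type*} [Fintype m] [DecidableEq m] {A : Matrix m m ℝ}
    (hA : A.IsHermitian) : ℝ :=
  maxEig hA - minEig hA

/-- `q` lists the eigenvalues of the Hermitian matrix `A` (with multiplicity) in
nonincreasing order. -/
def IsDescSpectrum {m : Type*} [Fintype m] [DecidableEq m] {A : Matrix m m ℝ}
    (hA : A.IsHermitian) {k : ℕ} (q : Fin k → ℝ) : Prop :=
  Antitone q ∧ ∃ e : Fin k ≃ m, ∀ i, q i = hA.eigenvalues (e i)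

noncomputable instance edgeSetFintype [Fintype V] (G : SimpleGraph V) : Fintype G.edgeSet :=
  Set.Finite.fintype (Set.toFinite _)

/-- The number of edges of a graph. -/
noncomputable def numEdges (G : SimpleGraph V) : ℕ := Nat.card G.edgeSet

/-- The total graph of `G`: vertices are the vertices and edges of `G`, with adjacency
given by adjacency in `G`, adjacency in the line graph, or vertex-edge incidence. -/
def totalGraph (G : SimpleGraph V) : SimpleGraph (V ⊕ G.edgeSet) where
  Adj x y :=
    match x, y with
    | Sum.inl u, Sum.inl v => G.Adj u v
    | Sum.inl u, Sum.inr e => u ∈ (e : Sym2 V)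
    | Sum.inr e, Sum.inl u => u ∈ (e : Sym2 V)
    | Sum.inr e, Sum.inr f => e ≠ f ∧ ∃ v, v ∈ (e : Sym2 V) ∧ v ∈ (f : Sym2 V)
  symm := by
    constructor
    rintro (u|e) (v|f) h
    · exact G.adj_symm h
    · exact h
    · exact h
    · exact ⟨h.1.symm, h.2.choose, h.2.choose_spec.2, h.2.choose_spec.1⟩
  loopless := by
    constructor
    rintro (u|e) h
    · exact G.irrefl h
    · exact h.1 rfl

/-- The join `G ∨ H` of two graphs: all edges between the two vertex sets are added. -/
def joinG {α β : Type*} (G : SimpleGraph α) (H : SimpleGraph β) : SimpleGraph (α ⊕ β) where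
  Adj x y :=
    match x, y with
    | Sum.inl a, Sum.inl b => G.Adj a b
    | Sum.inr a, Sum.inr b => H.Adj a b
    | Sum.inl _, Sum.inr _ => True
    | Sum.inr _, Sum.inl _ => True
  symm := by
    constructor
    rintro (a|a) (b|b) h
    · exact G.adj_symm h
    · exact trivial
    · exact trivial
    · exact H.adj_symm h
  loopless := by
    constructor
    rintro (a|a) h
    · exact G.irrefl h
    · exact H.irrefl h

/-- The disjoint union of two graphs. -/
def dunion {α β : Type*} (G : SimpleGraph α) (H : SimpleGraph β) : SimpleGraph (α ⊕ β) where
  Adj x y :=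
    match x, y with
    | Sum.inl a, Sum.inl b => G.Adj a b
    | Sum.inr a, Sum.inr b => H.Adj a b
    | Sum.inl _, Sum.inr _ => False
    | Sum.inr _, Sum.inl _ => False
  symm := by
    constructor
    rintro (a|a) (b|b) h
    · exact G.adj_symm h
    · exact h.elim
    · exact h.elim
    · exact H.adj_symm h
  loopless := by
    constructor
    rintro (a|a) h
    · exact G.irrefl h
    · exact H.irrefl h

/-- `G` is `r`-regular. -/
def IsReg [Fintype V] (G : SimpleGraph V) (r : ℕ) : Prop := ∀ v, deg G v = r

/-- The minimum degree of a graph. -/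
noncomputable def minDeg [Fintype V] (G : SimpleGraph V) : ℕ := sInf (Set.range (deg G))

/-- The maximum degree of a graph. -/
noncomputable def maxDeg [Fintype V] (G : SimpleGraph V) : ℕ := sSup (Set.range (deg G))

/-- The first Zagreb index of a graph: the sum of the squares of the vertex degrees. -/
noncomputable def zagreb [Fintype V] (G : SimpleGraph V) : ℕ := ∑ v, (deg G v) ^ 2

/-- The vertex connectivity of `G` is at most `k`: some set of at most `k` vertices
disconnects `G`. -/
def HasConnLe (G : SimpleGraph V) (k : ℕ) : Prop :=
  ∃ U : Set V, Nat.card U ≤ k ∧ (Uᶜ).Nonempty ∧ ¬ (G.induce Uᶜ).Preconnected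

end SpreadPaper

open scoped Pointwise

theorem Real.sSup_add_singleton_sub_sInf_add_singleton {s : Set ℝ} (hsa : BddAbove s)
    (hsb : BddBelow s) (c : ℝ) :
    sSup (s + {c}) - sInf (s + {c}) = sSup s - sInf s := by
  rcases s.eq_empty_or_nonempty with rfl | hs
  · simp
  · rw [csSup_add hs hsa (Set.singleton_nonempty c) bddAbove_singleton,
      csInf_add hs hsb (Set.singleton_nonempty c) bddBelow_singleton, csSup_singleton,
      csInf_singleton]
    ring

namespace Matrix

variable {m n R : Type*} [Fintype m] [Fintype n] [DecidableEq m] [DecidableEq n]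

theorem charpoly_mul_comm_of_card_eq [CommRing R] (A : Matrix m n R) (B : Matrix n m R)
    (h : Fintype.card m = Fintype.card n) : (A * B).charpoly = (B * A).charpoly :=
  (isRegular_X_pow (Fintype.card n)).left.eq_iff.mp <| h ▸ charpoly_mul_comm' A B

theorem spectrum_eq_of_charpoly_eq [Field R] {A : Matrix m m R} {B : Matrix n n R}
    (h : A.charpoly = B.charpoly) : spectrum R A = spectrum R B := by
  ext r
  rw [mem_spectrum_iff_isRoot_charpoly, mem_spectrum_iff_isRoot_charpoly, h]

end Matrix

namespace Sym2

theorem card_filter_mem_and_mem_of_ne {α : Type*} [Fintype α] [DecidableEq α] {e f : Sym2 α}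
    (hef : e ≠ f) :
    (Finset.univ.filter fun v => v ∈ e ∧ v ∈ f).card = if ∃ v, v ∈ e ∧ v ∈ f then 1 else 0 := by
  have hle : (Finset.univ.filter fun v => v ∈ e ∧ v ∈ f).card ≤ 1 := by
    refine Finset.card_le_one.2 fun x hx y hy => by_contra fun hxy => hef ?_
    simp only [Finset.mem_filter, Finset.mem_univ, true_and] at hx hy
    rw [(mem_and_mem_iff hxy).1 ⟨hx.1, hy.1⟩, (mem_and_mem_iff hxy).1 ⟨hx.2, hy.2⟩]
  split_ifs with hcommon
  · obtain ⟨v, hv⟩ := hcommon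
    exact le_antisymm hle (Finset.card_pos.2 ⟨v, by simpa using hv⟩)
  · simpa using hcommon

end Sym2

namespace SimpleGraph

variable {V R : Type*} [Fintype V] [DecidableEq V] (G : SimpleGraph V) [DecidableRel G.Adj]

theorem incMatrix_transpose_mul_apply_of_ne [NonAssocSemiring R] {e f : Sym2 V}
    (he : e ∈ G.edgeSet) (hf : f ∈ G.edgeSet) (hef : e ≠ f) :
    ((G.incMatrix R)ᵀ * G.incMatrix R) e f = if ∃ v, v ∈ e ∧ v ∈ f then 1 else 0 := by
  have hinc : ∀ {v : V} {d : Sym2 V}, d ∈ G.edgeSet → (d ∈ G.incidenceSet v ↔ v ∈ d) :=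
    fun hd => and_iff_right hd
  simp only [mul_apply, transpose_apply, incMatrix_apply', ite_zero_mul_ite_zero, one_mul,
    Finset.sum_boole, hinc he, hinc hf, Sym2.card_filter_mem_and_mem_of_ne hef]
  split_ifs <;> simp

end SimpleGraph

namespace SpreadPaper

variable {V : Type*}

def edgeIncMatrix [DecidableEq V] (G : SimpleGraph V) : Matrix V G.edgeSet ℝ :=
  letI := Classical.decRel G.Adj
  (G.incMatrix ℝ).submatrix id (↑)

theorem edgeIncMatrix_mul_transpose [Fintype V] [DecidableEq V] (G : SimpleGraph V) :
    edgeIncMatrix G * (edgeIncMatrix G)ᵀ = signQ G := by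
  classical
  have hcols : edgeIncMatrix G * (edgeIncMatrix G)ᵀ = G.incMatrix ℝ * (G.incMatrix ℝ)ᵀ := by
    ext a b
    simp only [edgeIncMatrix, mul_apply, transpose_apply, submatrix_apply, id]
    rw [Finset.sum_set_coe (f := fun e => G.incMatrix ℝ a e * G.incMatrix ℝ b e)]
    refine Finset.sum_subset (Finset.subset_univ _) fun e _ he => ?_
    rw [G.incMatrix_of_notMem_incidenceSet fun h => he (Set.mem_toFinset.2 h.1), zero_mul]
  rw [hcols, G.incMatrix_mul_transpose]
  ext a b
  by_cases hab : a = b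
  · subst hab
    simp [signQ, adjMat, deg]
  · simp [signQ, adjMat, hab]

theorem edgeIncMatrix_transpose_mul [Fintype V] [DecidableEq V] (G : SimpleGraph V) :
    (edgeIncMatrix G)ᵀ * edgeIncMatrix G = adjMat G.lineGraph + (2 : ℝ) • 1 := by
  classical
  ext e f
  have hrows : ((edgeIncMatrix G)ᵀ * edgeIncMatrix G) e f
      = ((G.incMatrix ℝ)ᵀ * G.incMatrix ℝ) (e : Sym2 V) f := rfl
  rw [hrows]
  by_cases hef : e = f
  · subst hef
    simp [G.incMatrix_transpose_mul_diag, e.2, adjMat]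
  · rw [G.incMatrix_transpose_mul_apply_of_ne e.2 f.2 (Subtype.coe_ne_coe.2 hef)]
    simp [adjMat, hef, SimpleGraph.lineGraph_adj_iff_exists]

theorem sprd_eq_sSup_sub_sInf_spectrum {m : Type*} [Fintype m] [DecidableEq m]
    {A : Matrix m m ℝ} (hA : A.IsHermitian) :
    sprd hA = sSup (spectrum ℝ A) - sInf (spectrum ℝ A) := by
  rw [hA.spectrum_real_eq_range_eigenvalues]
  rfl

/-- if `m = n` then `S_L(G) = q₁ - q_n = S_Q(G)`. -/
theorem lineGraph_spread_eq_signless_spread {V : Type*} [Fintype V] [DecidableEq V]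
    (G : SimpleGraph V) (hmn : numEdges G = Fintype.card V) :
    sprd (adjMat_isHermitian G.lineGraph) = sprd (signQ_isHermitian G) := by
  have hcard : Fintype.card V = Fintype.card G.edgeSet := by
    rw [← hmn, numEdges, Nat.card_eq_fintype_card]
  have hspec : spectrum ℝ (signQ G) = spectrum ℝ (adjMat G.lineGraph) + ({2} : Set ℝ) := by
    rw [spectrum.add_singleton_eq, Algebra.algebraMap_eq_smul_one,
      ← edgeIncMatrix_transpose_mul, ← edgeIncMatrix_mul_transpose]
    exact Matrix.spectrum_eq_of_charpoly_eq (Matrix.charpoly_mul_comm_of_card_eq _ _ hcard)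
  have hfinite := (adjMat G.lineGraph).finite_spectrum
  rw [sprd_eq_sSup_sub_sInf_spectrum, sprd_eq_sSup_sub_sInf_spectrum, hspec,
    Real.sSup_add_singleton_sub_sInf_add_singleton hfinite.bddAbove hfinite.bddBelow]

end SpreadPaper
end
end

section
/- Let G be a connected graph and G + e be obtained by adding a new edge. Then the spread of the line graph strictly increases: S_L(G) < S_L(G + e). -/
/-!
Let `A` and `A'` be the adjacency matrices of `L(G)` and `L(G + e)`. Since `L(G)` is an induced
subgraph of `L(G + e)`, `A` is a principal submatrix of `A'`, and extending a bottom eigenvector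
of `A` by zero shows that the smallest eigenvalue does not increase. For the largest one take a
nonnegative Perron vector `x` of `A`. As `L(G)` is connected, `x` is positive, and the new edge
meets some edge of `G` at `u`, so `(A' x̃)_e > 0` for the zero extension `x̃`. Moving `x̃` slightly
in the direction of the new coordinate then raises the Rayleigh quotient above `λ₁(A)`.
-/

open Matrix Polynomial BigOperators

noncomputable section

namespace SpreadPaper

variable {V : Type*}

lemma dotProduct_mulVec_eq_sum_sum {m : Type*} [Fintype m] (B : Matrix m m ℝ) (x : m → ℝ) :
    x ⬝ᵥ B *ᵥ x = ∑ k, ∑ l, B k l * (x k * x l) := by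
  simp only [dotProduct, mulVec, Finset.mul_sum]
  exact Finset.sum_congr rfl fun k _ => Finset.sum_congr rfl fun l _ => by ring

section Rayleigh

open scoped MatrixOrder

variable {m : Type*} [Fintype m] [DecidableEq m] {A : Matrix m m ℝ} (hA : A.IsHermitian)

lemma eigenvalues_le_maxEig (i : m) : hA.eigenvalues i ≤ maxEig hA :=
  le_ciSup (Set.finite_range _).bddAbove i

lemma minEig_le_eigenvalues (i : m) : minEig hA ≤ hA.eigenvalues i :=
  ciInf_le (Set.finite_range _).bddBelow i

lemma exists_eigenvalues_eq_maxEig [Nonempty m] : ∃ i, hA.eigenvalues i = maxEig hA := by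
  obtain ⟨i, hi⟩ := Finite.exists_max hA.eigenvalues
  exact ⟨i, le_antisymm (eigenvalues_le_maxEig hA i) (ciSup_le hi)⟩

lemma exists_eigenvalues_eq_minEig [Nonempty m] : ∃ i, hA.eigenvalues i = minEig hA := by
  obtain ⟨i, hi⟩ := Finite.exists_min hA.eigenvalues
  exact ⟨i, le_antisymm (le_ciInf hi) (minEig_le_eigenvalues hA i)⟩

lemma exists_unit_mulVec_eq_eigenvalues_smul (i : m) :
    ∃ x : m → ℝ, x ⬝ᵥ x = 1 ∧ A *ᵥ x = hA.eigenvalues i • x := by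
  refine ⟨_, ?_, hA.mulVec_eigenvectorBasis i⟩
  have h : inner ℝ (hA.eigenvectorBasis i) (hA.eigenvectorBasis i) = 1 := by
    rw [real_inner_self_eq_norm_sq, hA.eigenvectorBasis.orthonormal.1 i, one_pow]
  rwa [EuclideanSpace.inner_eq_star_dotProduct, star_trivial] at h

lemma le_algebraMap_maxEig : A ≤ algebraMap ℝ (Matrix m m ℝ) (maxEig hA) := by
  refine le_algebraMap_of_spectrum_le (fun r hr => ?_) hA.isSelfAdjoint
  obtain ⟨i, rfl⟩ := hA.spectrum_real_eq_range_eigenvalues ▸ hr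
  exact eigenvalues_le_maxEig hA i

lemma algebraMap_minEig_le : algebraMap ℝ (Matrix m m ℝ) (minEig hA) ≤ A := by
  refine algebraMap_le_of_le_spectrum (fun r hr => ?_) hA.isSelfAdjoint
  obtain ⟨i, rfl⟩ := hA.spectrum_real_eq_range_eigenvalues ▸ hr
  exact minEig_le_eigenvalues hA i

lemma algebraMap_mulVec (c : ℝ) (x : m → ℝ) : algebraMap ℝ (Matrix m m ℝ) c *ᵥ x = c • x :=
  diagonal_const_mulVec c x

lemma dotProduct_mulVec_le_maxEig_mul (x : m → ℝ) : x ⬝ᵥ A *ᵥ x ≤ maxEig hA * (x ⬝ᵥ x) := by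
  have := (le_iff.mp (le_algebraMap_maxEig hA)).dotProduct_mulVec_nonneg x
  rwa [star_trivial, sub_mulVec, dotProduct_sub, algebraMap_mulVec, dotProduct_smul, smul_eq_mul,
    sub_nonneg] at this

lemma minEig_mul_le_dotProduct_mulVec (x : m → ℝ) : minEig hA * (x ⬝ᵥ x) ≤ x ⬝ᵥ A *ᵥ x := by
  have := (le_iff.mp (algebraMap_minEig_le hA)).dotProduct_mulVec_nonneg x
  rwa [star_trivial, sub_mulVec, dotProduct_sub, algebraMap_mulVec, dotProduct_smul, smul_eq_mul,
    sub_nonneg] at this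

lemma mulVec_eq_maxEig_smul_of_dotProduct_mulVec_eq (x : m → ℝ)
    (hx : x ⬝ᵥ A *ᵥ x = maxEig hA * (x ⬝ᵥ x)) : A *ᵥ x = maxEig hA • x := by
  have hpsd := le_iff.mp (le_algebraMap_maxEig hA)
  have := (hpsd.dotProduct_mulVec_zero_iff x).mp <| by
    rw [star_trivial, sub_mulVec, dotProduct_sub, algebraMap_mulVec, dotProduct_smul, smul_eq_mul,
      hx, sub_self]
  rwa [sub_mulVec, algebraMap_mulVec, sub_eq_zero, eq_comm] at this

lemma exists_nonneg_unit_mulVec_eq_maxEig_smul [Nonempty m] (hA₀ : ∀ i j, 0 ≤ A i j) :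
    ∃ x : m → ℝ, (∀ i, 0 ≤ x i) ∧ x ⬝ᵥ x = 1 ∧ A *ᵥ x = maxEig hA • x := by
  obtain ⟨i, hi⟩ := exists_eigenvalues_eq_maxEig hA
  obtain ⟨w, hw, hAw⟩ := exists_unit_mulVec_eq_eigenvalues_smul hA i
  have habs : (fun k => |w k|) ⬝ᵥ (fun k => |w k|) = 1 := by
    rw [← hw]; exact Finset.sum_congr rfl fun k _ => abs_mul_abs_self (w k)
  refine ⟨fun k => |w k|, fun k => abs_nonneg _, habs, ?_⟩
  refine mulVec_eq_maxEig_smul_of_dotProduct_mulVec_eq hA _ <| le_antisymm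
    (dotProduct_mulVec_le_maxEig_mul hA _) ?_
  calc maxEig hA * ((fun k => |w k|) ⬝ᵥ fun k => |w k|)
      = w ⬝ᵥ A *ᵥ w := by rw [habs, hAw, dotProduct_smul, hw, hi, smul_eq_mul]
    _ = ∑ k, ∑ l, A k l * (w k * w l) := dotProduct_mulVec_eq_sum_sum A w
    _ ≤ ∑ k, ∑ l, A k l * (|w k| * |w l|) := by
      refine Finset.sum_le_sum fun k _ => Finset.sum_le_sum fun l _ => ?_
      exact mul_le_mul_of_nonneg_left (abs_mul (w k) (w l) ▸ le_abs_self _) (hA₀ k l)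
    _ = _ := (dotProduct_mulVec_eq_sum_sum A _).symm

lemma dotProduct_mulVec_lt_maxEig (x : m → ℝ) (j : m) (hxj : x j = 0) (hx : x ⬝ᵥ x = 1)
    (hAx : (A *ᵥ x) j ≠ 0) : x ⬝ᵥ A *ᵥ x < maxEig hA := by
  set s := (A *ᵥ x) j
  set c := |x ⬝ᵥ A *ᵥ x - A j j| + 1
  set t := s / c
  have hc : 0 < c := by positivity
  have ht : t * c = s := div_mul_cancel₀ s hc.ne'
  have hsym : x ⬝ᵥ A *ᵥ Pi.single j 1 = s := by
    rw [dotProduct_mulVec, ← mulVec_transpose, ← conjTranspose_eq_transpose_of_trivial, hA.eq,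
      dotProduct_comm, single_one_dotProduct]
  have hyy : (x + t • Pi.single j 1) ⬝ᵥ (x + t • Pi.single j 1) = 1 + t ^ 2 := by
    simp only [add_dotProduct, dotProduct_add, smul_dotProduct, dotProduct_smul,
      single_one_dotProduct, dotProduct_single_one, Pi.add_apply, Pi.smul_apply, Pi.single_eq_same,
      hxj, hx, smul_eq_mul]
    ring
  have hyAy : (x + t • Pi.single j 1) ⬝ᵥ A *ᵥ (x + t • Pi.single j 1) =
      x ⬝ᵥ A *ᵥ x + 2 * t * s + t ^ 2 * A j j := by
    simp only [mulVec_add, mulVec_smul, add_dotProduct, dotProduct_add, smul_dotProduct,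
      dotProduct_smul, hsym, single_one_dotProduct, smul_eq_mul]
    rw [mulVec_single_one, col_apply]
    ring
  have hbound := dotProduct_mulVec_le_maxEig_mul hA (x + t • Pi.single j 1)
  rw [hyy, hyAy] at hbound
  have ht0 : 0 < t ^ 2 := sq_pos_of_ne_zero (div_ne_zero hAx hc.ne')
  have hgap : t ^ 2 * (x ⬝ᵥ A *ᵥ x - A j j) < 2 * t * s := by
    rw [← ht]
    nlinarith [le_abs_self (x ⬝ᵥ A *ᵥ x - A j j)]
  nlinarith

end Rayleigh

section ExtendByZero

open Function

variable {m n : Type*} [Fintype m] [Fintype n] {f : m → n}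

lemma sum_mul_extend_zero (hf : Injective f) (g : n → ℝ) (x : m → ℝ) :
    ∑ i, g i * extend f x 0 i = ∑ k, g (f k) * x k := by
  classical
  rw [← Finset.sum_subset (Finset.subset_univ (Finset.univ.map ⟨f, hf⟩)), Finset.sum_map]
  · simp only [Embedding.coeFn_mk, hf.extend_apply]
  · intro i _ hi
    rw [extend_apply' _ _ _ fun ⟨k, hk⟩ => hi (by simp [← hk]), Pi.zero_apply, mul_zero]

lemma extend_zero_dotProduct_self (hf : Injective f) (x : m → ℝ) :
    extend f x 0 ⬝ᵥ extend f x 0 = x ⬝ᵥ x := by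
  simp only [dotProduct, sum_mul_extend_zero hf, hf.extend_apply]

lemma mulVec_extend_zero_apply (hf : Injective f) (B : Matrix n n ℝ) (x : m → ℝ) (i : n) :
    (B *ᵥ extend f x 0) i = ∑ k, B i (f k) * x k :=
  sum_mul_extend_zero hf (B i) x

lemma extend_zero_dotProduct_mulVec (hf : Injective f) (B : Matrix n n ℝ) (x : m → ℝ) :
    extend f x 0 ⬝ᵥ B *ᵥ extend f x 0 = x ⬝ᵥ B.submatrix f f *ᵥ x := by
  rw [dotProduct_comm, dotProduct, sum_mul_extend_zero hf, dotProduct]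
  refine Finset.sum_congr rfl fun k _ => ?_
  rw [mulVec_extend_zero_apply hf, mul_comm]
  rfl

variable [DecidableEq m] [DecidableEq n] {A : Matrix m m ℝ} {B : Matrix n n ℝ}

lemma minEig_le_minEig_of_submatrix_eq [Nonempty m] (hf : Injective f) (hA : A.IsHermitian)
    (hB : B.IsHermitian) (hAB : B.submatrix f f = A) : minEig hB ≤ minEig hA := by
  obtain ⟨i, hi⟩ := exists_eigenvalues_eq_minEig hA
  obtain ⟨x, hx, hAx⟩ := exists_unit_mulVec_eq_eigenvalues_smul hA i
  have := minEig_mul_le_dotProduct_mulVec hB (extend f x 0)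
  rwa [extend_zero_dotProduct_self hf, extend_zero_dotProduct_mulVec hf, hAB, hAx,
    dotProduct_smul, hx, smul_eq_mul, mul_one, mul_one, hi] at this

lemma maxEig_lt_maxEig_of_submatrix_eq (hf : Injective f) (hA : A.IsHermitian)
    (hB : B.IsHermitian) (hAB : B.submatrix f f = A) (x : m → ℝ) (hx : x ⬝ᵥ x = 1)
    (hAx : A *ᵥ x = maxEig hA • x) (j : n) (hj : j ∉ Set.range f)
    (hBx : ∑ k, B j (f k) * x k ≠ 0) : maxEig hA < maxEig hB := by
  have := dotProduct_mulVec_lt_maxEig hB (extend f x 0) j (extend_apply' _ _ _ fun h => hj h)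
    (by rwa [extend_zero_dotProduct_self hf]) (by rwa [mulVec_extend_zero_apply hf])
  rwa [extend_zero_dotProduct_mulVec hf, hAB, hAx, dotProduct_smul, hx, smul_eq_mul,
    mul_one] at this

end ExtendByZero

section AdjMat

variable {W : Type*} {H : SimpleGraph W}

lemma adjMat_apply_of_adj {a b : W} (h : H.Adj a b) : adjMat H a b = 1 := by
  simp [adjMat, SimpleGraph.adjMatrix_apply, h]

lemma adjMat_apply_nonneg (a b : W) : 0 ≤ adjMat H a b := by
  unfold adjMat
  rw [SimpleGraph.adjMatrix_apply]
  split_ifs <;> norm_num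

lemma adjMat_submatrix_of_embedding {W' : Type*} {H' : SimpleGraph W'} (φ : H ↪g H') :
    (adjMat H').submatrix φ φ = adjMat H := by
  ext a b
  simp only [adjMat, submatrix_apply, SimpleGraph.adjMatrix_apply]
  by_cases h : H.Adj a b
  · rw [if_pos h, if_pos (φ.map_adj_iff.mpr h)]
  · rw [if_neg h, if_neg (mt φ.map_adj_iff.mp h)]

lemma le_sum_adjMat_mul {ι : Type*} [Fintype ι] {g : ι → W} {x : ι → ℝ} (hx : ∀ k, 0 ≤ x k)
    {a : W} {k : ι} (h : H.Adj a (g k)) : x k ≤ ∑ l, adjMat H a (g l) * x l :=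
  calc x k = adjMat H a (g k) * x k := by rw [adjMat_apply_of_adj h, one_mul]
    _ ≤ _ := Finset.single_le_sum (fun l _ => mul_nonneg (adjMat_apply_nonneg _ _) (hx l))
      (Finset.mem_univ k)

lemma pos_of_adjMat_mulVec_eq_smul [Fintype W] (hH : H.Preconnected) {x : W → ℝ} {μ : ℝ}
    (hx₀ : ∀ i, 0 ≤ x i) (hx : x ≠ 0) (hAx : adjMat H *ᵥ x = μ • x) (i : W) : 0 < x i := by
  have hstep : ∀ a b, H.Adj a b → 0 < x a → 0 < x b := by
    intro a b hab ha
    have : x a ≤ μ * x b := (le_sum_adjMat_mul (g := id) hx₀ hab.symm).trans_eq (congrFun hAx b)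
    refine (hx₀ b).lt_of_ne fun hb => ?_
    rw [← hb, mul_zero] at this
    linarith
  have hwalk : ∀ a b (p : H.Walk a b), 0 < x a → 0 < x b := by
    intro a b p
    induction p with
    | nil => exact id
    | cons h _ ih => exact fun ha => ih (hstep _ _ h ha)
  obtain ⟨a, ha⟩ := Function.ne_iff.mp hx
  exact hwalk a i (hH a i).some ((hx₀ a).lt_of_ne' ha)

end AdjMat

section LineGraph

variable {V : Type*} {G : SimpleGraph V}

lemma lineGraph_reachable_of_mem_of_mem {a : V} {e f : G.edgeSet} (he : a ∈ (e : Sym2 V))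
    (hf : a ∈ (f : Sym2 V)) : G.lineGraph.Reachable e f := by
  by_cases hef : e = f
  · exact hef ▸ SimpleGraph.Reachable.refl e
  · exact (SimpleGraph.lineGraph_adj_iff_exists.mpr ⟨hef, a, he, hf⟩).reachable

lemma lineGraph_preconnected (hG : G.Preconnected) : G.lineGraph.Preconnected := by
  have hwalk : ∀ a b (p : G.Walk a b) (e f : G.edgeSet), a ∈ (e : Sym2 V) →
      b ∈ (f : Sym2 V) → G.lineGraph.Reachable e f := by
    intro a b p
    induction p with
    | nil => exact fun e f => lineGraph_reachable_of_mem_of_mem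
    | @cons a c _ h _ ih =>
      intro e f he hf
      let g : G.edgeSet := ⟨s(a, c), h⟩
      exact (lineGraph_reachable_of_mem_of_mem he (Sym2.mem_mk_left a c)).trans
        (ih g f (Sym2.mem_mk_right a c) hf)
  intro e f
  exact hwalk _ _ (hG _ _).some e f (Sym2.out_fst_mem _) (Sym2.out_fst_mem _)

end LineGraph

/-- adding an edge to a connected graph strictly increases the spread of
the line graph. -/
theorem lineGraph_spread_lt_addEdge {V : Type*} [Fintype V] [DecidableEq V]
    (G : SimpleGraph V) (hconn : G.Connected) (u v : V) (huv : u ≠ v) (hne : ¬ G.Adj u v) :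
    sprd (adjMat_isHermitian G.lineGraph) <
      sprd (adjMat_isHermitian (G ⊔ SimpleGraph.fromEdgeSet {s(u, v)}).lineGraph) := by
  set G' := G ⊔ SimpleGraph.fromEdgeSet {s(u, v)}
  let ι := (SimpleGraph.Copy.ofLE G G' le_sup_left).toLineGraphEmbedding
  have hι (e : G.edgeSet) : (ι e : Sym2 V) = e := by
    simp [ι, SimpleGraph.Copy.toLineGraphEmbedding]
  let e' : G'.edgeSet := ⟨s(u, v), by simp [G', huv]⟩
  have he' : e' ∉ Set.range ι := by
    rintro ⟨e, he⟩
    have : (e : Sym2 V) = s(u, v) := (hι e).symm.trans (congrArg Subtype.val he)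
    exact hne (by simpa [this] using e.2)
  have : Nontrivial V := nontrivial_of_ne u v huv
  obtain ⟨w, huw⟩ := hconn.preconnected.exists_adj_of_nontrivial u
  let f₀ : G.edgeSet := ⟨s(u, w), huw⟩
  have hadj : G'.lineGraph.Adj e' (ι f₀) :=
    SimpleGraph.lineGraph_adj_iff_exists.mpr ⟨fun h => he' ⟨f₀, h.symm⟩, u,
      Sym2.mem_mk_left u v, by simp [hι, f₀]⟩
  have : Nonempty G.edgeSet := ⟨f₀⟩
  obtain ⟨x, hx₀, hx, hAx⟩ := exists_nonneg_unit_mulVec_eq_maxEig_smul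
    (adjMat_isHermitian G.lineGraph) adjMat_apply_nonneg
  have hpos := pos_of_adjMat_mulVec_eq_smul (lineGraph_preconnected hconn.preconnected) hx₀
    (fun h => by simp [h] at hx) hAx f₀
  have hmax := maxEig_lt_maxEig_of_submatrix_eq ι.injective (adjMat_isHermitian _)
    (adjMat_isHermitian _) (adjMat_submatrix_of_embedding ι) x hx hAx e' he'
    (hpos.trans_le (le_sum_adjMat_mul hx₀ hadj)).ne'
  have hmin := minEig_le_minEig_of_submatrix_eq ι.injective (adjMat_isHermitian _)
    (adjMat_isHermitian _) (adjMat_submatrix_of_embedding ι)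
  unfold sprd
  linarith

end SpreadPaper
end
end

section
/- Let G be a connected r-regular graph of order n with r ≥ 3 and smallest adjacency eigenvalue λ_n. Then the smallest adjacency eigenvalue of the total graph T(G) equals (2λ_n + r - 2 - √(4λ_n + r² + 4))/2; in particular this quantity is at most -2. -/
open Matrix Polynomial BigOperators

noncomputable section

namespace SpreadPaper

variable {V : Type*}

/-!
Write the adjacency matrix of `T(G)` in block form `[[A, B], [Bᵀ, BᵀB - 2I]]`, where `B` is the
vertex–edge incidence matrix, so that `BBᵀ = A + rI`; in particular `λ_n ≥ -r`. Let
`θ = (2λ_n + r - 2 - √(4λ_n + r² + 4))/2`, the smaller root `ν` of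
`(λ_n - ν)(λ_n + r - 2 - ν) = λ_n + r`. If `Au = λ_n u`, then `(k u, Bᵀu)` with
`k = θ + 2 - λ_n - r < 0` is a `θ`-eigenvector of `T(G)`. Conversely, let `(x, y)` be an
eigenvector for the smallest eigenvalue `ν` of `T(G)`. If `x = 0`, then `By = 0` and `ν = -2`,
which is `≥ θ` because `-r ≤ λ_n ≤ -1`. Otherwise, pairing the two block equations with an
eigenvector `v` of `A` with `v ⬝ x ≠ 0`, respectively with `Bᵀv`, gives
`(μ - ν)(μ + r - 2 - ν) = μ + r` for its eigenvalue `μ ≥ λ_n`; since the smaller root of this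
equation increases with `μ` (for `r ≥ 3`), `ν ≥ θ`.
-/

section Spectrum

variable {m : Type*} [Fintype m] [DecidableEq m] {A : Matrix m m ℝ}

theorem mem_spectrum_iff_exists_mulVec_eq_smul {μ : ℝ} :
    μ ∈ spectrum ℝ A ↔ ∃ v ≠ 0, A *ᵥ v = μ • v := by
  rw [← Matrix.spectrum_toLin', ← Module.End.hasEigenvalue_iff_mem_spectrum]
  constructor
  · intro h
    obtain ⟨v, hv⟩ := h.exists_hasEigenvector
    exact ⟨v, hv.2, by simpa using hv.apply_eq_smul⟩
  · rintro ⟨v, hv0, hv⟩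
    exact Module.End.hasEigenvalue_of_hasEigenvector
      ⟨by simpa [Module.End.mem_eigenspace_iff] using hv, hv0⟩

theorem add_mem_spectrum_add_smul_one_iff {μ c : ℝ} :
    μ + c ∈ spectrum ℝ (A + c • 1) ↔ μ ∈ spectrum ℝ A := by
  rw [add_comm A, ← Algebra.algebraMap_eq_smul_one, spectrum.add_mem_add_iff]

variable (hA : A.IsHermitian)

theorem minEig_le_of_mem_spectrum {μ : ℝ} (h : μ ∈ spectrum ℝ A) : minEig hA ≤ μ := by
  obtain ⟨i, rfl⟩ := hA.spectrum_real_eq_range_eigenvalues ▸ h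
  exact ciInf_le (Set.finite_range _).bddBelow i

theorem minEig_mem_spectrum [Nonempty m] : minEig hA ∈ spectrum ℝ A := by
  obtain ⟨i, hi⟩ := exists_eq_ciInf_of_finite (f := hA.eigenvalues)
  rw [minEig, ← hi]
  exact hA.eigenvalues_mem_spectrum_real i

theorem neg_le_minEig_of_posSemidef {c : ℝ} [Nonempty m] (h : (A + c • 1).PosSemidef) :
    -c ≤ minEig hA := by
  have hmem : minEig hA + c ∈ spectrum ℝ (A + c • 1) :=
    add_mem_spectrum_add_smul_one_iff.mpr (minEig_mem_spectrum hA)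
  have := (Matrix.posSemidef_iff_isHermitian_and_spectrum_nonneg.mp h).2 hmem
  simp only [Set.mem_ofPred_eq] at this
  linarith

theorem posSemidef_sub_minEig_smul_one : (A - minEig hA • 1).PosSemidef := by
  refine Matrix.posSemidef_iff_isHermitian_and_spectrum_nonneg.mpr
    ⟨hA.sub (Matrix.isHermitian_one.smul (IsSelfAdjoint.all _)), ?_⟩
  intro ν hν
  rw [sub_eq_add_neg, ← neg_smul, ← sub_add_cancel ν (-minEig hA),
    add_mem_spectrum_add_smul_one_iff] at hν
  have := minEig_le_of_mem_spectrum hA hν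
  simp only [Set.mem_ofPred_eq]
  linarith

theorem minEig_mul_dotProduct_self_le (x : m → ℝ) : minEig hA * (x ⬝ᵥ x) ≤ x ⬝ᵥ (A *ᵥ x) := by
  have := (posSemidef_sub_minEig_smul_one hA).dotProduct_mulVec_nonneg x
  simp only [star_trivial, Matrix.sub_mulVec, Matrix.smul_mulVec, Matrix.one_mulVec,
    dotProduct_sub, dotProduct_smul, smul_eq_mul] at this
  linarith

theorem eigenvectorBasis_dotProduct_mulVec (i : m) (x : m → ℝ) :
    ⇑(hA.eigenvectorBasis i) ⬝ᵥ (A *ᵥ x) =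
      hA.eigenvalues i * (⇑(hA.eigenvectorBasis i) ⬝ᵥ x) := by
  have hAt : Aᵀ = A := by rw [← Matrix.conjTranspose_eq_transpose_of_trivial]; exact hA
  rw [dotProduct_mulVec, ← Matrix.mulVec_transpose, hAt, hA.mulVec_eigenvectorBasis,
    smul_dotProduct, smul_eq_mul]

theorem exists_eigenvectorBasis_dotProduct_ne_zero {x : m → ℝ} (hx : x ≠ 0) :
    ∃ i, ⇑(hA.eigenvectorBasis i) ⬝ᵥ x ≠ 0 := by
  by_contra! h
  apply hx
  rw [← WithLp.ofLp_toLp 2 x, ← (hA.eigenvectorBasis).sum_repr' (WithLp.toLp 2 x)]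
  simp [EuclideanSpace.inner_eq_star_dotProduct, dotProduct_comm x, h]

end Spectrum

section LowerTotalEig

/-- The smaller root `ν` of `(μ - ν) * (μ + r - 2 - ν) = μ + r`. By Cvetković's theorem, the
eigenvalues of the total graph of an `r`-regular graph are the two roots of this equation for
each adjacency eigenvalue `μ`, together with `-2`. -/
def lowerTotalEig (μ r : ℝ) : ℝ := (2 * μ + r - 2 - √(4 * μ + r ^ 2 + 4)) / 2

variable {μ ν r : ℝ}

theorem abs_sub_two_le_sqrt (h : -r ≤ μ) : |r - 2| ≤ √(4 * μ + r ^ 2 + 4) :=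
  Real.abs_le_sqrt (by nlinarith [sq_nonneg (r - 2)])

theorem sub_lowerTotalEig_mul_eq (h : -r ≤ μ) :
    (μ - lowerTotalEig μ r) * (μ + r - 2 - lowerTotalEig μ r) = μ + r := by
  have hs := Real.sq_sqrt (show 0 ≤ 4 * μ + r ^ 2 + 4 by nlinarith [sq_nonneg (r - 2)])
  unfold lowerTotalEig
  linear_combination hs / 4

theorem lowerTotalEig_le (h : -r ≤ μ) : lowerTotalEig μ r ≤ μ := by
  have := abs_sub_two_le_sqrt h
  unfold lowerTotalEig
  linarith [le_abs_self (r - 2)]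

theorem lowerTotalEig_lt (hr : 2 < r) : lowerTotalEig μ r < μ + r - 2 := by
  have := Real.sqrt_nonneg (4 * μ + r ^ 2 + 4)
  unfold lowerTotalEig
  linarith

theorem lowerTotalEig_le_neg_two (h₁ : -r ≤ μ) (h₂ : μ ≤ -1) : lowerTotalEig μ r ≤ -2 := by
  unfold lowerTotalEig
  suffices 2 * μ + r + 2 ≤ √(4 * μ + r ^ 2 + 4) by linarith
  rcases le_or_gt (2 * μ + r + 2) 0 with h | h
  · exact h.trans (Real.sqrt_nonneg _)
  · exact Real.le_sqrt_of_sq_le (by nlinarith)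

theorem lowerTotalEig_le_of_mul_eq {μ₀ : ℝ} (hr : 3 ≤ r) (hμ₀ : -r ≤ μ₀) (hμ : μ₀ ≤ μ)
    (hν : (μ - ν) * (μ + r - 2 - ν) = μ + r) : lowerTotalEig μ₀ r ≤ ν := by
  set θ := lowerTotalEig μ₀ r
  have hθ := sub_lowerTotalEig_mul_eq hμ₀
  have hθμ₀ : θ ≤ μ₀ := lowerTotalEig_le hμ₀
  have hθr : θ ≤ μ₀ + r - 3 := by
    have := abs_sub_two_le_sqrt hμ₀
    have := le_abs_self (r - 2)
    unfold θ lowerTotalEig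
    linarith
  by_contra! hνθ
  have hgrow : 0 ≤ (μ - μ₀) * (μ + μ₀ + r - 3 - 2 * θ) :=
    mul_nonneg (by linarith) (by linarith)
  have hshift : 0 < (θ - ν) * (2 * μ + r - 2 - ν - θ) :=
    mul_pos (by linarith) (by linarith)
  nlinarith

end LowerTotalEig

theorem fromBlocks_mulVec_sumElim_eq_smul_iff {R l m : Type*} [Semiring R] [Fintype l]
    [Fintype m] {A : Matrix l l R} {B : Matrix l m R} {C : Matrix m l R} {D : Matrix m m R}
    {x : l → R} {y : m → R} {ν : R} :
    fromBlocks A B C D *ᵥ Sum.elim x y = ν • Sum.elim x y ↔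
      A *ᵥ x + B *ᵥ y = ν • x ∧ C *ᵥ x + D *ᵥ y = ν • y := by
  rw [fromBlocks_mulVec, Sum.elim_comp_inl, Sum.elim_comp_inr, ← Sum.elim_eq_iff]
  constructor <;> intro h <;> rw [h] <;> ext (i | i) <;> rfl

section TotalBlock

variable {m n : Type*} [Fintype m] [DecidableEq m] [Fintype n]
  {A : Matrix m m ℝ} {B : Matrix m n ℝ} {r : ℝ} {T : Matrix (m ⊕ n) (m ⊕ n) ℝ}

theorem neg_le_minEig_of_mul_transpose_eq [Nonempty m] (hA : A.IsHermitian)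
    (hB : B * Bᵀ = A + r • 1) : -r ≤ minEig hA := by
  refine neg_le_minEig_of_posSemidef hA ?_
  rw [← hB, ← Matrix.conjTranspose_eq_transpose_of_trivial]
  exact Matrix.posSemidef_self_mul_conjTranspose B

theorem minEig_le_lowerTotalEig [DecidableEq n] [Nonempty m] (hA : A.IsHermitian)
    (hT : T.IsHermitian) (hB : B * Bᵀ = A + r • 1)
    (hTAB : T = fromBlocks A B Bᵀ (Bᵀ * B - (2 : ℝ) • 1)) (hr : 2 < r) :
    minEig hT ≤ lowerTotalEig (minEig hA) r := by
  obtain ⟨u, hu, hAu⟩ := mem_spectrum_iff_exists_mulVec_eq_smul.mp (minEig_mem_spectrum hA)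
  set μ₀ := minEig hA
  set θ := lowerTotalEig μ₀ r
  have hroot := sub_lowerTotalEig_mul_eq (neg_le_minEig_of_mul_transpose_eq hA hB)
  have hk : θ + 2 - μ₀ - r ≠ 0 := by linarith [lowerTotalEig_lt (μ := μ₀) hr]
  have hBBu : B *ᵥ (Bᵀ *ᵥ u) = (μ₀ + r) • u := by
    rw [mulVec_mulVec, hB, add_mulVec, hAu, smul_mulVec, one_mulVec, add_smul]
  refine minEig_le_of_mem_spectrum hT (mem_spectrum_iff_exists_mulVec_eq_smul.mpr
    ⟨Sum.elim ((θ + 2 - μ₀ - r) • u) (Bᵀ *ᵥ u), ?_, ?_⟩)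
  · intro h
    exact hu ((smul_eq_zero.mp (congrArg (· ∘ Sum.inl) h)).resolve_left hk)
  · rw [hTAB, fromBlocks_mulVec_sumElim_eq_smul_iff]
    constructor
    · rw [mulVec_smul, hAu, hBBu, smul_smul, smul_smul, ← add_smul]
      congr 1
      linear_combination -hroot
    · rw [sub_mulVec, ← mulVec_mulVec, hBBu, mulVec_smul, mulVec_smul, smul_mulVec, one_mulVec]
      module

theorem exists_mem_spectrum_mul_eq [DecidableEq n] (hA : A.IsHermitian)
    (hB : B * Bᵀ = A + r • 1) {x : m → ℝ} {y : n → ℝ} {ν : ℝ} (hx : x ≠ 0)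
    (htop : A *ᵥ x + B *ᵥ y = ν • x)
    (hbot : Bᵀ *ᵥ x + (Bᵀ * B - (2 : ℝ) • 1) *ᵥ y = ν • y) :
    ∃ μ ∈ spectrum ℝ A, (μ - ν) * (μ + r - 2 - ν) = μ + r := by
  obtain ⟨i, hi⟩ := exists_eigenvectorBasis_dotProduct_ne_zero hA hx
  set v := ⇑(hA.eigenvectorBasis i)
  set μ := hA.eigenvalues i
  have hvA (w : m → ℝ) : v ⬝ᵥ (A *ᵥ w) = μ * (v ⬝ᵥ w) := eigenvectorBasis_dotProduct_mulVec hA i w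
  have hvB (w : m → ℝ) : (Bᵀ *ᵥ v) ⬝ᵥ (Bᵀ *ᵥ w) = (μ + r) * (v ⬝ᵥ w) := by
    rw [mulVec_transpose, ← dotProduct_mulVec, mulVec_mulVec, hB, add_mulVec, smul_mulVec,
      one_mulVec, dotProduct_add, dotProduct_smul, hvA, smul_eq_mul]
    ring
  have hBt (w : n → ℝ) : (Bᵀ *ᵥ v) ⬝ᵥ w = v ⬝ᵥ (B *ᵥ w) := by
    rw [mulVec_transpose, ← dotProduct_mulVec]
  have h₁ : μ * (v ⬝ᵥ x) + v ⬝ᵥ (B *ᵥ y) = ν * (v ⬝ᵥ x) := by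
    simpa only [dotProduct_add, dotProduct_smul, hvA, smul_eq_mul] using congrArg (v ⬝ᵥ ·) htop
  have h₂ : (μ + r) * (v ⬝ᵥ x) + (μ + r - 2) * (v ⬝ᵥ (B *ᵥ y)) = ν * (v ⬝ᵥ (B *ᵥ y)) := by
    have := congrArg ((Bᵀ *ᵥ v) ⬝ᵥ ·) hbot
    rw [dotProduct_add, sub_mulVec, dotProduct_sub, ← mulVec_mulVec, hvB, hvB, smul_mulVec,
      one_mulVec, dotProduct_smul, dotProduct_smul, hBt, smul_eq_mul, smul_eq_mul] at this
    linear_combination this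
  refine ⟨μ, hA.eigenvalues_mem_spectrum_real i, mul_left_cancel₀ hi ?_⟩
  linear_combination (μ + r - 2 - ν) * h₁ - h₂

theorem lowerTotalEig_le_minEig [DecidableEq n] [Nonempty m] (hA : A.IsHermitian)
    (hT : T.IsHermitian) (hB : B * Bᵀ = A + r • 1)
    (hTAB : T = fromBlocks A B Bᵀ (Bᵀ * B - (2 : ℝ) • 1)) (hr : 3 ≤ r) (hA₁ : minEig hA ≤ -1) :
    lowerTotalEig (minEig hA) r ≤ minEig hT := by
  subst hTAB
  have hAr := neg_le_minEig_of_mul_transpose_eq hA hB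
  obtain ⟨z, hz, hTz⟩ := mem_spectrum_iff_exists_mulVec_eq_smul.mp (minEig_mem_spectrum hT)
  rw [← Sum.elim_comp_inl_inr z, fromBlocks_mulVec_sumElim_eq_smul_iff] at hTz
  obtain ⟨htop, hbot⟩ := hTz
  by_cases hx : z ∘ Sum.inl = 0
  · -- then `B y = 0`, and `hbot` becomes `-2 • y = ν • y`
    have hy : z ∘ Sum.inr ≠ 0 := fun hy ↦
      hz (by rw [← Sum.elim_comp_inl_inr z, hx, hy, Sum.elim_zero_zero])
    rw [hx, mulVec_zero, zero_add, smul_zero] at htop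
    rw [hx, mulVec_zero, zero_add, sub_mulVec, ← mulVec_mulVec, htop, mulVec_zero, zero_sub,
      smul_mulVec, one_mulVec, ← neg_smul] at hbot
    rw [← smul_left_injective ℝ hy hbot]
    exact lowerTotalEig_le_neg_two hAr hA₁
  · obtain ⟨μ, hμ, hroot⟩ := exists_mem_spectrum_mul_eq hA hB hx htop hbot
    exact lowerTotalEig_le_of_mul_eq hr hAr (minEig_le_of_mem_spectrum hA hμ) hroot

end TotalBlock

section Incidence

open scoped Finset

open Classical in
theorem adjMat_apply {V : Type*} (G : SimpleGraph V) (u v : V) :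
    adjMat G u v = if G.Adj u v then 1 else 0 := by
  rw [adjMat, SimpleGraph.adjMatrix_apply]

theorem exists_adj_of_isReg {V : Type*} [Fintype V] [Nonempty V] {G : SimpleGraph V} {r : ℕ}
    (hreg : IsReg G r) (hr : 0 < r) : ∃ u v, G.Adj u v := by
  classical
  obtain ⟨u⟩ := ‹Nonempty V›
  have hdeg : G.degree u = r := hreg u
  obtain ⟨v, huv⟩ := (G.degree_pos_iff_exists_adj u).mp (hdeg ▸ hr)
  exact ⟨u, v, huv⟩

variable {V : Type*} [DecidableEq V] (G : SimpleGraph V)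

/-- Mathlib's incidence matrix, with its columns restricted to the edges of `G`, which are the
vertices of the second kind of `totalGraph G`. -/
def incMat : Matrix V G.edgeSet ℝ :=
  letI := Classical.decRel G.Adj
  (G.incMatrix ℝ).submatrix id (↑)

theorem incMat_apply (v : V) (e : G.edgeSet) :
    incMat G v e = if v ∈ (e : Sym2 V) then 1 else 0 := by
  classical
  simp [incMat, SimpleGraph.incMatrix_apply', SimpleGraph.incidenceSet, e.2]

variable [Fintype V]

theorem incMat_mul_transpose : incMat G * (incMat G)ᵀ = signQ G := by
  classical
  ext u v
  have hsum : (incMat G * (incMat G)ᵀ) u v = (G.incMatrix ℝ * (G.incMatrix ℝ)ᵀ) u v := by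
    rw [Matrix.mul_apply, Matrix.mul_apply,
      ← Finset.sum_subset (Finset.subset_univ G.edgeFinset), Finset.sum_subtype G.edgeFinset
        (p := (· ∈ G.edgeSet)) (fun _ ↦ SimpleGraph.mem_edgeFinset)]
    · rfl
    · intro e _ he
      rw [SimpleGraph.mem_edgeFinset] at he
      simp [SimpleGraph.incMatrix_apply', SimpleGraph.incidenceSet, he]
  rw [hsum, SimpleGraph.incMatrix_mul_transpose]
  by_cases huv : u = v
  · subst huv
    simp [signQ, adjMat, deg]
  · simp [signQ, adjMat, huv]

theorem signQ_eq_of_isReg {r : ℕ} (hreg : IsReg G r) : signQ G = adjMat G + (r : ℝ) • 1 := by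
  rw [signQ, add_comm, Matrix.smul_one_eq_diagonal]
  congr
  funext v
  rw [hreg v]

theorem transpose_incMat_mul_apply (e f : G.edgeSet) :
    ((incMat G)ᵀ * incMat G) e f = #{v | v ∈ (e : Sym2 V) ∧ v ∈ (f : Sym2 V)} := by
  simp [Matrix.mul_apply, incMat_apply, ← ite_and, Finset.sum_boole, and_comm]

theorem card_filter_mem_edge (e : G.edgeSet) : #{v | v ∈ (e : Sym2 V)} = 2 := by
  rw [show ({v | v ∈ (e : Sym2 V)} : Finset V) = (e : Sym2 V).toFinset by ext; simp]
  exact Sym2.card_toFinset_of_not_isDiag _ (G.not_isDiag_of_mem_edgeSet e.2)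

theorem card_filter_mem_edge_of_ne {e f : G.edgeSet} (hef : e ≠ f) :
    #{v | v ∈ (e : Sym2 V) ∧ v ∈ (f : Sym2 V)} =
      if ∃ v, v ∈ (e : Sym2 V) ∧ v ∈ (f : Sym2 V) then 1 else 0 := by
  split_ifs with h
  · obtain ⟨w, hw⟩ := h
    refine Finset.card_eq_one.mpr ⟨w, Finset.eq_singleton_iff_unique_mem.mpr ⟨by simpa, ?_⟩⟩
    intro v hv
    by_contra hvw
    simp only [Finset.mem_filter, Finset.mem_univ, true_and] at hv
    exact hef (Subtype.ext (Sym2.eq_of_ne_mem hvw hv.1 hw.1 hv.2 hw.2))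
  · simpa using h

theorem adjMat_totalGraph : adjMat (totalGraph G) =
    fromBlocks (adjMat G) (incMat G) (incMat G)ᵀ ((incMat G)ᵀ * incMat G - (2 : ℝ) • 1) := by
  classical
  ext (u | e) (v | f) <;> rw [adjMat_apply]
  · rw [fromBlocks_apply₁₁, adjMat_apply]; rfl
  · rw [fromBlocks_apply₁₂, incMat_apply]; exact if_congr Iff.rfl rfl rfl
  · rw [fromBlocks_apply₂₁, transpose_apply, incMat_apply]; exact if_congr Iff.rfl rfl rfl
  · rw [fromBlocks_apply₂₂, Matrix.sub_apply, transpose_incMat_mul_apply, Matrix.smul_apply,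
      one_apply]
    by_cases hef : e = f
    · subst hef
      simp [card_filter_mem_edge, totalGraph]
    · rw [card_filter_mem_edge_of_ne G hef]
      simp [hef, totalGraph]

theorem minEig_adjMat_le_neg_one {u v : V} (huv : G.Adj u v) :
    minEig (adjMat_isHermitian G) ≤ -1 := by
  set x : V → ℝ := Pi.single u 1 - Pi.single v 1
  have hxx : x ⬝ᵥ x = 2 := by
    simp [x, G.ne_of_adj huv, (G.ne_of_adj huv).symm]
    norm_num
  have hxAx : x ⬝ᵥ (adjMat G *ᵥ x) = -2 := by
    simp [x, mulVec_sub, adjMat_apply, huv, huv.symm]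
    norm_num
  have := minEig_mul_dotProduct_self_le (adjMat_isHermitian G) x
  rw [hxx, hxAx] at this
  linarith

end Incidence

/-- for a connected `r`-regular graph with `r ≥ 3`, the smallest eigenvalue
of the total graph is `(2λ_n + r - 2 - √(4λ_n + r² + 4))/2`, which is at most `-2`. -/
theorem minEig_totalGraph_regular {V : Type*} [Fintype V] [DecidableEq V]
    (G : SimpleGraph V) (hconn : G.Connected) (r : ℕ) (hr : 3 ≤ r) (hreg : IsReg G r) :
    minEig (adjMat_isHermitian (totalGraph G)) =
        (2 * minEig (adjMat_isHermitian G) + (r : ℝ) - 2 -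
          Real.sqrt (4 * minEig (adjMat_isHermitian G) + (r : ℝ) ^ 2 + 4)) / 2 ∧
    (2 * minEig (adjMat_isHermitian G) + (r : ℝ) - 2 -
        Real.sqrt (4 * minEig (adjMat_isHermitian G) + (r : ℝ) ^ 2 + 4)) / 2 ≤ -2 := by
  have : Nonempty V := hconn.nonempty
  have hr' : (3 : ℝ) ≤ r := by exact_mod_cast hr
  have hB : incMat G * (incMat G)ᵀ = adjMat G + (r : ℝ) • 1 :=
    (incMat_mul_transpose G).trans (signQ_eq_of_isReg G hreg)
  obtain ⟨u, v, huv⟩ := exists_adj_of_isReg hreg (by omega)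
  have hA₁ := minEig_adjMat_le_neg_one G huv
  have hT := adjMat_totalGraph G
  refine ⟨le_antisymm ?_ ?_, ?_⟩
  · exact minEig_le_lowerTotalEig _ _ hB hT (by linarith)
  · exact lowerTotalEig_le_minEig _ _ hB hT hr' hA₁
  · exact lowerTotalEig_le_neg_two (neg_le_minEig_of_mul_transpose_eq _ hB) hA₁

end SpreadPaper
end
end
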